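/- Let n ≥ 3 and define G : ℕ → ℕ by G(x) = mex {G(x-s) : s ∈ {2, 4n, 4n+2}, s ≤ x}. Then for all x ∈ ℕ, G(x) = 1 if and only if x ≥ 2 and G(x - 2) = 0 (Ferguson's property for the smallest subtraction value 2). -/
import Mathlib


noncomputable def mex (T : Set ℕ) : ℕ := sInf {k : ℕ | k ∉ T}

def subRec (n : ℕ) (G : ℕ → ℕ) : Prop :=
  ∀ x : ℕ, G x = mex {y : ℕ | ∃ s ∈ ({2, 4*n, 4*n+2} : Set ℕ), s ≤ x ∧ y = G (x - s)}

def passRec (n : ℕ) (G0 G1 : ℕ → ℕ) : Prop :=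
  G1 0 = 0 ∧ G1 1 = 0 ∧
  ∀ x : ℕ, 2 ≤ x →
    G1 x = mex ({y : ℕ | ∃ s ∈ ({2, 4*n, 4*n+2} : Set ℕ), s ≤ x ∧ y = G1 (x - s)} ∪ {G0 x})

lemma optSet_compl_nonempty (n x : ℕ) (G : ℕ → ℕ) :
    {k : ℕ | k ∉ {y : ℕ | ∃ s ∈ ({2, 4*n, 4*n+2} : Set ℕ), s ≤ x ∧ y = G (x - s)}}.Nonempty := by
  refine ⟨G (x - 2) + G (x - 4*n) + G (x - (4*n+2)) + 1, ?_⟩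
  rintro ⟨s, hs, hsx, hy⟩
  simp only [Set.mem_insert_iff, Set.mem_singleton_iff] at hs
  rcases hs with rfl | rfl | rfl <;> omega

lemma G_not_mem (n : ℕ) (G : ℕ → ℕ) (hG : subRec n G) (x : ℕ) :
    G x ∉ {y : ℕ | ∃ s ∈ ({2, 4*n, 4*n+2} : Set ℕ), s ≤ x ∧ y = G (x - s)} := by
  rw [hG x]
  exact Nat.sInf_mem (optSet_compl_nonempty n x G)

lemma zero_mem_of_ne (n : ℕ) (G : ℕ → ℕ) (hG : subRec n G) (x : ℕ) (h : G x ≠ 0) :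
    (0 : ℕ) ∈ {y : ℕ | ∃ s ∈ ({2, 4*n, 4*n+2} : Set ℕ), s ≤ x ∧ y = G (x - s)} := by
  by_contra h0
  have : G x ≤ 0 := by
    rw [hG x]; exact Nat.sInf_le h0
  omega

theorem stmt (n : ℕ) (hn : 3 ≤ n) (G : ℕ → ℕ) (hG : subRec n G) :
    ∀ x : ℕ, G x = 1 ↔ 2 ≤ x ∧ G (x - 2) = 0 := by
  intro x
  induction x using Nat.strong_induction_on with
  | _ x ih =>
    constructor
    · intro hx1
      -- 0 is among the option values, so x ≥ 2
      have h0mem := zero_mem_of_ne n G hG x (by omega)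
      obtain ⟨s0, hs0, hs0x, hy0⟩ := h0mem
      have hs0two : 2 ≤ s0 := by
        simp only [Set.mem_insert_iff, Set.mem_singleton_iff] at hs0
        rcases hs0 with rfl | rfl | rfl <;> omega
      have hx2 : 2 ≤ x := le_trans hs0two hs0x
      refine ⟨hx2, ?_⟩
      by_contra hne
      -- then 0 is among option values of x - 2
      obtain ⟨t, ht, htx, hyt⟩ := zero_mem_of_ne n G hG (x - 2) hne
      have ht2 : 2 ≤ t := by
        simp only [Set.mem_insert_iff, Set.mem_singleton_iff] at ht
        rcases ht with rfl | rfl | rfl <;> omega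
      -- G (x - t) = 1 by induction hypothesis, contradicting G x = 1
      have hxt : x - t < x := by omega
      have hGxt : G (x - t) = 1 := by
        rw [ih (x - t) hxt]
        refine ⟨by omega, ?_⟩
        have : x - t - 2 = x - 2 - t := by omega
        rw [this, ← hyt]
      have hmem : (1 : ℕ) ∈ {y : ℕ | ∃ s ∈ ({2, 4*n, 4*n+2} : Set ℕ), s ≤ x ∧ y = G (x - s)} :=
        ⟨t, ht, by omega, hGxt.symm⟩
      rw [← hx1] at hmem
      exact G_not_mem n G hG x hmem
    · rintro ⟨hx2, h0⟩
      -- 0 ∈ option set via s = 2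
      have h0mem : (0 : ℕ) ∈ {y : ℕ | ∃ s ∈ ({2, 4*n, 4*n+2} : Set ℕ), s ≤ x ∧ y = G (x - s)} :=
        ⟨2, by simp, hx2, h0.symm⟩
      -- 1 ∉ option set
      have h1mem : (1 : ℕ) ∉ {y : ℕ | ∃ s ∈ ({2, 4*n, 4*n+2} : Set ℕ), s ≤ x ∧ y = G (x - s)} := by
        rintro ⟨s, hs, hsx, hy⟩
        have hs2 : 2 ≤ s := by
          simp only [Set.mem_insert_iff, Set.mem_singleton_iff] at hs
          rcases hs with rfl | rfl | rfl <;> omega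
        have hxs : x - s < x := by omega
        obtain ⟨hxs2, hGs⟩ := (ih (x - s) hxs).mp hy.symm
        -- then 0 is an option value of x - 2, contradicting G (x - 2) = 0
        have hmem2 : (0 : ℕ) ∈ {y : ℕ | ∃ s ∈ ({2, 4*n, 4*n+2} : Set ℕ), s ≤ x - 2 ∧ y = G (x - 2 - s)} := by
          refine ⟨s, hs, by omega, ?_⟩
          have : x - 2 - s = x - s - 2 := by omega
          rw [this, hGs]
        rw [← h0] at hmem2
        exact G_not_mem n G hG (x - 2) hmem2
      -- conclude mex = 1
      rw [hG x]
      have hle : mex {y : ℕ | ∃ s ∈ ({2, 4*n, 4*n+2} : Set ℕ), s ≤ x ∧ y = G (x - s)} ≤ 1 :=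
        Nat.sInf_le h1mem
      have hne0 : mex {y : ℕ | ∃ s ∈ ({2, 4*n, 4*n+2} : Set ℕ), s ≤ x ∧ y = G (x - s)} ≠ 0 := by
        intro h
        have := Nat.sInf_mem (optSet_compl_nonempty n x G)
        rw [show sInf {k : ℕ | k ∉ {y : ℕ | ∃ s ∈ ({2, 4*n, 4*n+2} : Set ℕ), s ≤ x ∧ y = G (x - s)}} = mex {y : ℕ | ∃ s ∈ ({2, 4*n, 4*n+2} : Set ℕ), s ≤ x ∧ y = G (x - s)} from rfl, h] at this
        exact this h0mem
      omega
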